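/- arXiv:2409.00966 — 2 statements merged into one kernel-verified Lean document; each statement's English description precedes it below -/
import Mathlib

section
/- Let $k \geq 2$, $\epsilon \in (0,1)$, and $\omega(a,b) = k-1$ if $a=b$ and $-1$ otherwise. Let $\sigma_0, \ldots, \sigma_l$ be such that $\sigma_1, \ldots, \sigma_{l-1}$ are i.i.d. uniform on $[k]$ and independent of $(\sigma_0, \sigma_l)$. Then $\mathbb{E}\big[\prod_{i=1}^{l} (1 + \epsilon\, \omega(\sigma_{i-1}, \sigma_i)) \mid \sigma_0, \sigma_l\big] = 1 + \epsilon^l \cdot \omega(\sigma_0, \sigma_l)$. -/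
/-- Labels along a path of length `l`: position `0` gets `s0`, position `l` gets `sl`,
interior positions `1,…,l-1` get the values of `τ`. -/
def pathLabel {k : ℕ} (l : ℕ) (s0 sl : Fin k) (τ : Fin (l - 1) → Fin k) (i : ℕ) : Fin k :=
  if i = 0 then s0
  else if i = l then sl
  else if h : i - 1 < l - 1 then τ ⟨i - 1, h⟩ else sl

section aux
variable {k : ℕ} (ω : Fin k → Fin k → ℤ)
  (hω : ∀ a b : Fin k, ω a b = if a = b then (k : ℤ) - 1 else -1)
include hω

lemma omega_real (a b : Fin k) :
    ((ω a b : ℤ) : ℝ) = k * (if a = b then 1 else 0) - 1 := by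
  rw [hω]; split_ifs <;> push_cast <;> ring

lemma transfer (x y : ℝ) (a b : Fin k) :
    (∑ c : Fin k, (1 + x * ((ω a c : ℤ) : ℝ)) * (1 + y * ((ω c b : ℤ) : ℝ)))
      = k * (1 + x * y * ((ω a b : ℤ) : ℝ)) := by
  have h1 : ∀ c, (1 + x * ((ω a c : ℤ) : ℝ)) * (1 + y * ((ω c b : ℤ) : ℝ))
      = (1 - x) * (1 - y)
        + ((1 - x) * (y * k)) * (if c = b then (1:ℝ) else 0)
        + ((1 - y) * (x * k)) * (if a = c then (1:ℝ) else 0)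
        + (x * y * k * k) * ((if a = c then (1:ℝ) else 0) * (if c = b then (1:ℝ) else 0)) := by
    intro c
    rw [omega_real ω hω, omega_real ω hω]
    ring
  simp only [h1, Finset.sum_add_distrib, Finset.sum_const, ← Finset.mul_sum]
  have h2 : (∑ c : Fin k, (if c = b then (1:ℝ) else 0)) = 1 := by
    rw [Finset.sum_ite_eq' Finset.univ b (fun _ => (1:ℝ))]
    simp
  have h3 : (∑ c : Fin k, (if a = c then (1:ℝ) else 0)) = 1 := by
    rw [Finset.sum_ite_eq Finset.univ a (fun _ => (1:ℝ))]
    simp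
  have h4 : (∑ c : Fin k, (if a = c then (1:ℝ) else 0) * (if c = b then (1:ℝ) else 0))
      = (if a = b then (1:ℝ) else 0) := by
    simp only [ite_mul, one_mul, zero_mul]
    rw [Finset.sum_ite_eq Finset.univ a (fun c => if c = b then (1:ℝ) else 0)]
    simp
  rw [h2, h3, h4, omega_real ω hω]
  simp [Finset.card_univ]
  split_ifs <;> ring

end aux

lemma lab_cons {k m : ℕ} (s0 c sl : Fin k) (τ' : Fin m → Fin k) :
    ∀ i ≤ m + 1, pathLabel (m+2) s0 sl (Fin.cons c τ') (i+1) = pathLabel (m+1) c sl τ' i := by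
  intro i hi
  match i with
  | 0 =>
    simp only [pathLabel]
    split_ifs <;> first | rfl | omega | exact ‹False›.elim
  | j+1 =>
    by_cases hj : j = m
    · subst hj
      simp only [pathLabel]
      split_ifs <;> first | rfl | omega | exact ‹False›.elim
    · simp only [pathLabel]
      split_ifs <;> first | rfl | omega | exact ‹False›.elim

lemma key {k : ℕ} (ε : ℝ) (ω : Fin k → Fin k → ℤ)
    (hω : ∀ a b : Fin k, ω a b = if a = b then (k : ℤ) - 1 else -1) :
    ∀ (m : ℕ) (s0 sl : Fin k),
    (∑ τ : Fin m → Fin k, ∏ i ∈ Finset.range (m+1),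
        (1 + ε * ((ω (pathLabel (m+1) s0 sl τ i) (pathLabel (m+1) s0 sl τ (i+1)) : ℤ) : ℝ)))
      = (k:ℝ)^m * (1 + ε^(m+1) * ((ω s0 sl : ℤ) : ℝ)) := by
  intro m
  induction m with
  | zero =>
    intro s0 sl
    rw [Fintype.sum_unique]
    simp [pathLabel]
  | succ m ih =>
    intro s0 sl
    rw [← Equiv.sum_comp (Fin.consEquiv (fun _ : Fin (m+1) => Fin k)), Fintype.sum_prod_type]
    have hstep : ∀ (c : Fin k) (τ' : Fin m → Fin k),
        (∏ i ∈ Finset.range (m+1+1),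
          (1 + ε * ((ω (pathLabel (m+1+1) s0 sl (Fin.consEquiv (fun _ : Fin (m+1) => Fin k) (c, τ')) i)
              (pathLabel (m+1+1) s0 sl (Fin.consEquiv (fun _ : Fin (m+1) => Fin k) (c, τ')) (i+1)) : ℤ) : ℝ)))
        = (1 + ε * ((ω s0 c : ℤ) : ℝ)) *
          ∏ i ∈ Finset.range (m+1),
            (1 + ε * ((ω (pathLabel (m+1) c sl τ' i) (pathLabel (m+1) c sl τ' (i+1)) : ℤ) : ℝ)) := by
      intro c τ'
      rw [Finset.prod_range_succ']
      have hlab : ∀ i ≤ m + 1,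
          pathLabel (m+2) s0 sl (Fin.cons c τ') (i+1) = pathLabel (m+1) c sl τ' i :=
        lab_cons s0 c sl τ'
      have h0 : pathLabel (m+2) s0 sl (Fin.cons c τ') 0 = s0 := rfl
      have hc : (Fin.consEquiv (fun _ : Fin (m+1) => Fin k)) (c, τ') = Fin.cons c τ' := rfl
      rw [hc]
      rw [Finset.prod_congr rfl (fun i hi => by
        have hi' := Finset.mem_range.mp hi
        rw [hlab i (by omega), hlab (i+1) (by omega)])]
      rw [hlab 0 (by omega), h0]
      have hc0 : pathLabel (m+1) c sl τ' 0 = c := rfl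
      rw [hc0, mul_comm]
    simp only [hstep]
    have hinner : ∀ c : Fin k,
        (∑ τ' : Fin m → Fin k, (1 + ε * ((ω s0 c : ℤ) : ℝ)) *
          ∏ i ∈ Finset.range (m+1),
            (1 + ε * ((ω (pathLabel (m+1) c sl τ' i) (pathLabel (m+1) c sl τ' (i+1)) : ℤ) : ℝ)))
        = (k:ℝ)^m * ((1 + ε * ((ω s0 c : ℤ) : ℝ)) * (1 + ε^(m+1) * ((ω c sl : ℤ) : ℝ))) := by
      intro c
      rw [← Finset.mul_sum, ih c sl]
      ring
    simp only [hinner]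
    rw [← Finset.mul_sum, transfer ω hω ε (ε^(m+1)) s0 sl]
    ring

/-- with `ω(a,b) = k-1` if `a=b` and `-1` otherwise, `ε ∈ (0,1)`, interior
labels i.i.d. uniform on `[k]` independent of the endpoints, the conditional expectation of
`∏_{i=1}^l (1 + ε ω(σ_{i-1}, σ_i))` given the endpoint labels equals `1 + ε^l ω(s0, sl)`. -/
theorem stmt2 (k l : ℕ) (hk : 2 ≤ k) (hl : 1 ≤ l) (ε : ℝ) (hε0 : 0 < ε) (hε1 : ε < 1)
    (ω : Fin k → Fin k → ℤ)
    (hω : ∀ a b : Fin k, ω a b = if a = b then (k : ℤ) - 1 else -1)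
    (s0 sl : Fin k) :
    (∑ τ : Fin (l - 1) → Fin k,
        ∏ i ∈ Finset.range l,
          (1 + ε * ((ω (pathLabel l s0 sl τ i) (pathLabel l s0 sl τ (i + 1)) : ℤ) : ℝ))) /
      (k : ℝ) ^ (l - 1) = 1 + ε ^ l * ((ω s0 sl : ℤ) : ℝ) := by
  obtain ⟨m, rfl⟩ : ∃ m, l = m + 1 := ⟨l - 1, by omega⟩
  have hk0 : ((k : ℝ)) ^ m ≠ 0 := by
    apply pow_ne_zero
    exact_mod_cast (by omega : k ≠ 0)
  have hsum : (∑ τ : Fin (m + 1 - 1) → Fin k,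
      ∏ i ∈ Finset.range (m + 1),
        (1 + ε * ((ω (pathLabel (m+1) s0 sl τ i) (pathLabel (m+1) s0 sl τ (i + 1)) : ℤ) : ℝ)))
      = (k:ℝ)^m * (1 + ε^(m+1) * ((ω s0 sl : ℤ) : ℝ)) := key ε ω hω m s0 sl
  simp only [Nat.add_sub_cancel, hsum]
  rw [mul_div_cancel_left₀ _ hk0]
end

section
/- Let $S$ be a finite graph with no isolated vertices and let $H$ be a subgraph of $S$ such that every isolated vertex of $S$ is an isolated vertex of $H$ (written $H \ltimes S$). Let $\mathcal{L}(S)$ denote the set of leaves of $S$ (vertices of degree exactly 1 in $S$) and $\tau(G) = |E(G)| - |V(G)|$. Then $|\mathcal{L}(S) \setminus V(H)| \geq 2(\tau(H) - \tau(S))$. In particular, if $\mathcal{L}(S) \subseteq V(H)$ then $\tau(H) \leq \tau(S)$. -/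
/-- A finite (labeled) graph on a subset of `[n]`: a vertex set, and a set of
non-loop unordered edges whose endpoints lie in the vertex set. -/
structure FinGraph (n : ℕ) where
  verts : Finset (Fin n)
  edges : Finset (Sym2 (Fin n))
  not_isDiag : ∀ e ∈ edges, ¬ e.IsDiag
  endpoints_mem : ∀ e ∈ edges, ∀ v ∈ e, v ∈ verts

namespace FinGraph

variable {n : ℕ}

/-- Subgraph relation: `H ⊆ G` iff `V(H) ⊆ V(G)` and `E(H) ⊆ E(G)`. -/
def Sub (A B : FinGraph n) : Prop := A.verts ⊆ B.verts ∧ A.edges ⊆ B.edges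

/-- Degree of a vertex: the number of incident edges. -/
def degree (A : FinGraph n) (v : Fin n) : ℕ := (A.edges.filter (fun e => v ∈ e)).card

/-- Leaves of a graph: vertices of degree exactly `1`. -/
def leaves (A : FinGraph n) : Finset (Fin n) := A.verts.filter (fun v => A.degree v = 1)

end FinGraph

/-- if `S` has no isolated vertices, `H ⊆ S`, and every isolated vertex of
`S` is an isolated vertex of `H` (i.e. `H ⋉ S`), then
`|L(S) \ V(H)| ≥ 2(τ(H) - τ(S))` where `τ(G) = |E(G)| - |V(G)|`.
In particular, if `L(S) ⊆ V(H)` then `τ(H) ≤ τ(S)`. -/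
theorem stmt9 (n : ℕ) (S H : FinGraph n) (hSub : H.Sub S)
    (hNoIso : ∀ v ∈ S.verts, ∃ e ∈ S.edges, v ∈ e)
    (hIso : ∀ v ∈ S.verts, (∀ e ∈ S.edges, v ∉ e) → v ∈ H.verts ∧ ∀ e ∈ H.edges, v ∉ e) :
    2 * (((H.edges.card : ℤ) - H.verts.card) - ((S.edges.card : ℤ) - S.verts.card))
      ≤ ((S.leaves \ H.verts).card : ℤ)
    ∧ (S.leaves ⊆ H.verts →
        (H.edges.card : ℤ) - H.verts.card ≤ (S.edges.card : ℤ) - S.verts.card) := by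
  classical
  set X : Finset (Fin n) := S.verts \ H.verts with hXdef
  set F : Finset (Sym2 (Fin n)) := S.edges \ H.edges with hFdef
  -- for v ∈ X, all S-edges through v are in F
  have hdeg : ∀ v ∈ X, (F.filter (fun e => v ∈ e)).card = S.degree v := by
    intro v hv
    have hvH : v ∉ H.verts := (Finset.mem_sdiff.1 hv).2
    unfold FinGraph.degree
    congr 1
    ext e
    simp only [hFdef, Finset.mem_filter, Finset.mem_sdiff]
    constructor
    · rintro ⟨⟨he, _⟩, hve⟩; exact ⟨he, hve⟩
    · rintro ⟨he, hve⟩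
      refine ⟨⟨he, fun heH => hvH ?_⟩, hve⟩
      exact H.endpoints_mem e heH v hve
  -- double counting
  have swap : ∑ e ∈ F, (X.filter (fun v => v ∈ e)).card
      = ∑ v ∈ X, (F.filter (fun e => v ∈ e)).card := by
    simp only [Finset.card_filter]
    exact Finset.sum_comm
  -- upper bound per edge
  have hub : ∀ e ∈ F, (X.filter (fun v => v ∈ e)).card ≤ 2 := by
    intro e he
    induction e using Sym2.ind with
    | _ a b =>
      have : X.filter (fun v => v ∈ s(a, b)) ⊆ {a, b} := by
        intro x hx
        have := (Finset.mem_filter.1 hx).2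
        simp only [Sym2.mem_iff] at this
        simp [this]
      calc (X.filter (fun v => v ∈ s(a, b))).card ≤ ({a, b} : Finset (Fin n)).card :=
            Finset.card_le_card this
        _ ≤ 2 := Finset.card_insert_le _ _ |>.trans (by simp)
  have hupper : ∑ e ∈ F, (X.filter (fun v => v ∈ e)).card ≤ 2 * F.card := by
    calc ∑ e ∈ F, (X.filter (fun v => v ∈ e)).card ≤ ∑ _e ∈ F, 2 :=
          Finset.sum_le_sum hub
      _ = 2 * F.card := by rw [Finset.sum_const]; ring
  -- leaves outside H
  have hleaf : S.leaves \ H.verts = X.filter (fun v => S.degree v = 1) := by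
    ext v
    simp only [FinGraph.leaves, hXdef, Finset.mem_sdiff, Finset.mem_filter]
    tauto
  -- lower bound per vertex
  have hlower : 2 * X.card ≤ (∑ v ∈ X, S.degree v) + (S.leaves \ H.verts).card := by
    rw [hleaf, Finset.card_filter, ← Finset.sum_add_distrib]
    rw [show 2 * X.card = ∑ _v ∈ X, 2 by rw [Finset.sum_const]; ring]
    apply Finset.sum_le_sum
    intro v hv
    have hvS : v ∈ S.verts := (Finset.mem_sdiff.1 hv).1
    have hd1 : 1 ≤ S.degree v := by
      obtain ⟨e, he, hve⟩ := hNoIso v hvS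
      have : e ∈ S.edges.filter (fun e => v ∈ e) := Finset.mem_filter.2 ⟨he, hve⟩
      exact Finset.card_pos.2 ⟨e, this⟩
    by_cases hd : S.degree v = 1
    · simp [hd]
    · have : 2 ≤ S.degree v := by omega
      simp only [if_neg hd]
      omega
  -- combine in ℕ
  have hmain : 2 * X.card ≤ 2 * F.card + (S.leaves \ H.verts).card := by
    have h1 : ∑ v ∈ X, S.degree v ≤ 2 * F.card := by
      rw [← Finset.sum_congr rfl hdeg, ← swap]; exact hupper
    omega
  -- cast to ℤ
  have hXcard : (X.card : ℤ) = S.verts.card - H.verts.card := by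
    rw [hXdef, Finset.card_sdiff_of_subset hSub.1]
    exact_mod_cast Int.ofNat_sub (Finset.card_le_card hSub.1)
  have hFcard : (F.card : ℤ) = S.edges.card - H.edges.card := by
    rw [hFdef, Finset.card_sdiff_of_subset hSub.2]
    exact_mod_cast Int.ofNat_sub (Finset.card_le_card hSub.2)
  have hmainZ : (2 : ℤ) * X.card ≤ 2 * F.card + (S.leaves \ H.verts).card := by
    exact_mod_cast hmain
  constructor
  · rw [hXcard, hFcard] at hmainZ; linarith
  · intro hLH
    have : S.leaves \ H.verts = ∅ := Finset.sdiff_eq_empty_iff_subset.2 hLH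
    rw [this] at hmainZ
    simp only [Finset.card_empty, Nat.cast_zero, add_zero] at hmainZ
    rw [hXcard, hFcard] at hmainZ
    linarith
end
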